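/- arXiv:2108.13113 — 2 statements merged into one kernel-verified Lean document; each statement's English description precedes it below -/
import Mathlib

section
/- In a directed graph G with vertex v, let F be the forward-reachable set and B the backward-reachable set of v, and W = F ∩ B. Then every SCC other than W is fully contained in exactly one of the three sets F \ W, B \ W, or V \ (F ∪ B). -/
theorem fb_trichotomy {V : Type*} (E : V → V → Prop) (v : V)
    (F B W₀ : Set V)
    (hF : F = {w | Relation.ReflTransGen E v w})
    (hB : B = {w | Relation.ReflTransGen E w v})
    (hW₀ : W₀ = F ∩ B)
    (W : Set V)
    (hW : ∃ u, W = {w | Relation.ReflTransGen E u w ∧ Relation.ReflTransGen E w u})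
    (hne : W ≠ W₀) :
    (W ⊆ F \ W₀ ∨ W ⊆ B \ W₀ ∨ W ⊆ (F ∪ B)ᶜ) ∧
    ¬(W ⊆ F \ W₀ ∧ W ⊆ B \ W₀) ∧
    ¬(W ⊆ F \ W₀ ∧ W ⊆ (F ∪ B)ᶜ) ∧
    ¬(W ⊆ B \ W₀ ∧ W ⊆ (F ∪ B)ᶜ) := by
  obtain ⟨u, hWu⟩ := hW
  subst hF hB hW₀ hWu
  have huW : (⟨Relation.ReflTransGen.refl, Relation.ReflTransGen.refl⟩ :
      Relation.ReflTransGen E u u ∧ Relation.ReflTransGen E u u) = _ := rfl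
  -- no element of W lies in W₀
  have hdisj : ∀ w, Relation.ReflTransGen E u w → Relation.ReflTransGen E w u →
      Relation.ReflTransGen E v w → Relation.ReflTransGen E w v → False := by
    intro w huw hwu hvw hwv
    apply hne
    ext x
    constructor
    · rintro ⟨hux, hxu⟩
      exact ⟨hvw.trans (hwu.trans hux), (hxu.trans huw).trans hwv⟩
    · rintro ⟨hvx, hxv⟩
      exact ⟨(huw.trans hwv).trans hvx, hxv.trans (hvw.trans hwu)⟩
  refine ⟨?_, ?_, ?_, ?_⟩
  · by_cases hvF : Relation.ReflTransGen E v u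
    · left
      rintro w ⟨huw, hwu⟩
      exact ⟨hvF.trans huw, fun ⟨hvw, hwv⟩ => hdisj w huw hwu hvw hwv⟩
    · by_cases hvB : Relation.ReflTransGen E u v
      · right; left
        rintro w ⟨huw, hwu⟩
        exact ⟨hwu.trans hvB, fun ⟨hvw, hwv⟩ => hdisj w huw hwu hvw hwv⟩
      · right; right
        rintro w ⟨huw, hwu⟩
        rintro (hvw | hwv)
        · exact hvF (hvw.trans hwu)
        · exact hvB (huw.trans hwv)
  · rintro ⟨h1, h2⟩
    obtain ⟨hF, hnW⟩ := h1 ⟨Relation.ReflTransGen.refl, Relation.ReflTransGen.refl⟩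
    obtain ⟨hB, -⟩ := h2 ⟨Relation.ReflTransGen.refl, Relation.ReflTransGen.refl⟩
    exact hnW ⟨hF, hB⟩
  · rintro ⟨h1, h2⟩
    obtain ⟨hF, -⟩ := h1 ⟨Relation.ReflTransGen.refl, Relation.ReflTransGen.refl⟩
    exact h2 ⟨Relation.ReflTransGen.refl, Relation.ReflTransGen.refl⟩ (Or.inl hF)
  · rintro ⟨h1, h2⟩
    obtain ⟨hB, -⟩ := h1 ⟨Relation.ReflTransGen.refl, Relation.ReflTransGen.refl⟩
    exact h2 ⟨Relation.ReflTransGen.refl, Relation.ReflTransGen.refl⟩ (Or.inr hB)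
end

section
/- Let G = (V,E) be a directed graph and S ⊆ V an SCC-closed set. For v ∈ S, the forward-reachable set of v within the induced subgraph on S, intersected with the backward-reachable set of v within S, equals SCC(G, v). -/
/-!
An induced path between two vertices of `SCC(G, v)` can only fail to exist if some vertex lying on
a path between them leaves `S`. But every such vertex is itself in `SCC(G, v)`, and SCC-closedness
of `S` puts `SCC(G, v)` inside `S`, so the path in `G` is already a path in the induced subgraph.
-/

namespace Relation.ReflTransGen

variable {α : Type*} {r : α → α → Prop} {S : Set α} {a b : α}

theorem restrict_of_between_mem (hab : ReflTransGen r a b)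
    (hS : ∀ c, ReflTransGen r a c → ReflTransGen r c b → c ∈ S) :
    ReflTransGen (fun x y => r x y ∧ x ∈ S ∧ y ∈ S) a b := by
  induction hab with
  | refl => exact .refl
  | @tail c d hac hcd ih =>
    refine (ih fun e hae hec => hS e hae (hec.tail hcd)).tail ⟨hcd, ?_, ?_⟩
    · exact hS c hac (.single hcd)
    · exact hS d (hac.tail hcd) .refl

end Relation.ReflTransGen

open Relation

theorem induced_fb_eq_scc {V : Type*} (E : V → V → Prop) (S : Set V)
    (hclosed : ∀ W : Set V,
      (∃ u, W = {w | Relation.ReflTransGen E u w ∧ Relation.ReflTransGen E w u}) →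
      W ⊆ S ∨ W ∩ S = ∅)
    (v : V) (hv : v ∈ S) :
    {w | Relation.ReflTransGen (fun a b => E a b ∧ a ∈ S ∧ b ∈ S) v w} ∩
    {w | Relation.ReflTransGen (fun a b => E a b ∧ a ∈ S ∧ b ∈ S) w v}
      = {w | Relation.ReflTransGen E v w ∧ Relation.ReflTransGen E w v} := by
  have hscc : {w | ReflTransGen E v w ∧ ReflTransGen E w v} ⊆ S :=
    (hclosed _ ⟨v, rfl⟩).resolve_right (Set.nonempty_iff_ne_empty.mp ⟨v, ⟨.refl, .refl⟩, hv⟩)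
  have forget : ReflTransGen (fun a b => E a b ∧ a ∈ S ∧ b ∈ S) ≤ ReflTransGen E :=
    ReflTransGen.mono fun _ _ h => h.1
  ext w
  constructor
  · rintro ⟨hvw, hwv⟩
    exact ⟨forget _ _ hvw, forget _ _ hwv⟩
  · rintro ⟨hvw, hwv⟩
    exact ⟨hvw.restrict_of_between_mem fun c hvc hcw => hscc ⟨hvc, hcw.trans hwv⟩,
      hwv.restrict_of_between_mem fun c hwc hcv => hscc ⟨hvw.trans hwc, hcv⟩⟩
end
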